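/- Let n ≥ 1 be an integer and 0 < s < 1. There exists a constant C depending only on n such that for every τ > 0 and every y ∈ ℝⁿ with |y| ≥ 1, the first and second spatial partial derivatives of the fully fractional heat kernel satisfy |∂_{y_i} G(y,τ)| ≤ C Σ_{ε∈{−1,1}ⁿ} G(y+η_ε, τ) for every 1 ≤ i ≤ n, and |∂_{y_i}∂_{y_j} G(y,τ)| ≤ C Σ_{ε∈{−1,1}ⁿ} G(y+η_ε, τ) for all 1 ≤ i,j ≤ n. -/

import Mathlib

/-
The derivatives `∂_i G(y)` and `∂_i∂_j G(y)` are `G(y)` times `-y_i/(2τ)` and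
`y_i y_j/(4τ²) - δ_ij/(2τ)`, so for `|y| ≥ 1` both are at most `(t + t²) G(y)` with `t = |y|/(2τ)`. Taking
`ε_i = -sign y_i` moves `y` towards the origin: since `∑ |y_i| ≥ |y| ≥ 1`,
`|y + η_ε|² ≤ |y|² - |y|/n`, hence `G(y + η_ε) ≥ e^{t/(2n)} G(y)`, and the exponential gain
absorbs the polynomial: `t + t² ≤ 10 n² e^{t/(2n)}`.
-/

open MeasureTheory Metric Set

noncomputable section

/-- ℝⁿ as a Euclidean space. -/
abbrev Euc (n : ℕ) : Type := EuclideanSpace ℝ (Fin n)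

/-- The fully fractional heat kernel. -/
def fracHeatKernel (n : ℕ) (s : ℝ) (z : Euc n) (τ : ℝ) : ℝ :=
  if 0 < τ then
    (4 * Real.pi) ^ (-(n : ℝ) / 2) * |Real.Gamma (-s)|⁻¹ *
      τ ^ (-((n : ℝ) / 2 + 1 - s)) * Real.exp (-‖z‖ ^ 2 / (4 * τ))
  else 0

/-- For a sign vector `ε ∈ {-1,1}ⁿ`, the perturbation vector `η_ε = (1/n) ε`. -/
def signPerturb (n : ℕ) (ε : Fin n → Bool) : Euc n :=
  (EuclideanSpace.equiv (Fin n) ℝ).symm fun i => (1 / (n : ℝ)) * (if ε i then 1 else -1)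

open Real
open scoped RealInnerProductSpace

section Gaussian

variable {E : Type*} [NormedAddCommGroup E]

def gaussian (τ c : ℝ) (z : E) : ℝ := c * exp (-‖z‖ ^ 2 / (4 * τ))

variable {τ c : ℝ}

theorem gaussian_nonneg (hc : 0 ≤ c) (z : E) : 0 ≤ gaussian τ c z :=
  mul_nonneg hc (exp_pos _).le

theorem gaussian_mul_exp_le (hτ : 0 < τ) (hc : 0 ≤ c) {x y : E} {δ : ℝ}
    (h : ‖x‖ ^ 2 ≤ ‖y‖ ^ 2 - δ) : gaussian τ c y * exp (δ / (4 * τ)) ≤ gaussian τ c x := by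
  rw [gaussian, gaussian, mul_assoc, ← exp_add]
  gcongr
  rw [← add_div]
  gcongr
  linarith

variable [InnerProductSpace ℝ E]

theorem hasFDerivAt_gaussian (τ c : ℝ) (y : E) :
    HasFDerivAt (gaussian τ c) (-(gaussian τ c y / (2 * τ)) • innerSL ℝ y) y := by
  have hsq : HasFDerivAt (fun z : E => ‖z‖ ^ 2) (2 • innerSL ℝ y) y :=
    (hasStrictFDerivAt_norm_sq y).hasFDerivAt
  have hexp := ((hsq.mul_const (-(4 * τ)⁻¹)).exp).const_mul c
  have hfun : gaussian τ c = fun z : E => c * exp (‖z‖ ^ 2 * -(4 * τ)⁻¹) := by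
    ext z; simp only [gaussian]; ring_nf
  rw [hfun]
  refine hexp.congr_fderiv ?_
  ext v
  simp only [smul_apply, innerSL_apply_apply, smul_eq_mul, nsmul_eq_mul]
  ring_nf

theorem fderiv_gaussian_apply (τ c : ℝ) (y v : E) :
    fderiv ℝ (gaussian τ c) y v = -(⟪y, v⟫ / (2 * τ)) * gaussian τ c y := by
  simp only [(hasFDerivAt_gaussian τ c y).fderiv, smul_apply, innerSL_apply_apply, smul_eq_mul]
  ring

theorem fderiv_fderiv_gaussian_apply (τ c : ℝ) (y v w : E) :
    fderiv ℝ (fun z => fderiv ℝ (gaussian τ c) z w) y v =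
      (⟪y, v⟫ * ⟪y, w⟫ / (4 * τ ^ 2) - ⟪v, w⟫ / (2 * τ)) * gaussian τ c y := by
  have hfun : (fun z => fderiv ℝ (gaussian τ c) z w) =
      fun z => ⟪w, z⟫ * -(2 * τ)⁻¹ * gaussian τ c z := by
    ext z; rw [fderiv_gaussian_apply, real_inner_comm]; ring
  rw [hfun]
  have hw : HasFDerivAt (fun z : E => ⟪w, z⟫) (innerSL ℝ w) y := (innerSL ℝ w).hasFDerivAt
  have h : HasFDerivAt (fun z => ⟪w, z⟫ * -(2 * τ)⁻¹ * gaussian τ c z) _ y :=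
    (hw.mul_const (-(2 * τ)⁻¹)).mul (hasFDerivAt_gaussian τ c y)
  rw [h.fderiv]
  simp only [add_apply, smul_apply, innerSL_apply_apply, smul_eq_mul, real_inner_comm w]
  ring

theorem abs_fderiv_gaussian_apply_le (hτ : 0 < τ) (hc : 0 ≤ c) (y v : E) :
    |fderiv ℝ (gaussian τ c) y v| ≤ ‖y‖ * ‖v‖ / (2 * τ) * gaussian τ c y := by
  rw [fderiv_gaussian_apply, abs_mul, abs_neg, abs_div, abs_of_pos (by positivity : 0 < 2 * τ),
    abs_of_nonneg (gaussian_nonneg hc y)]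
  exact mul_le_mul_of_nonneg_right (by gcongr; exact abs_real_inner_le_norm y v)
    (gaussian_nonneg hc y)

theorem abs_fderiv_fderiv_gaussian_apply_le (hτ : 0 < τ) (hc : 0 ≤ c) (y v w : E) :
    |fderiv ℝ (fun z => fderiv ℝ (gaussian τ c) z w) y v| ≤
      (‖y‖ ^ 2 / (4 * τ ^ 2) + 1 / (2 * τ)) * (‖v‖ * ‖w‖) * gaussian τ c y := by
  rw [fderiv_fderiv_gaussian_apply, abs_mul, abs_of_nonneg (gaussian_nonneg hc y)]
  refine mul_le_mul_of_nonneg_right ?_ (gaussian_nonneg hc y)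
  calc _ ≤ |⟪y, v⟫ * ⟪y, w⟫ / (4 * τ ^ 2)| + |⟪v, w⟫ / (2 * τ)| := abs_sub _ _
    _ ≤ _ := by
      rw [abs_div, abs_div, abs_mul, abs_of_pos (by positivity : 0 < 4 * τ ^ 2),
        abs_of_pos (by positivity : 0 < 2 * τ)]
      have hyv := abs_real_inner_le_norm y v
      have hyw := abs_real_inner_le_norm y w
      have hvw := abs_real_inner_le_norm v w
      have hyvw : |⟪y, v⟫| * |⟪y, w⟫| ≤ ‖y‖ ^ 2 * (‖v‖ * ‖w‖) :=
        calc _ ≤ (‖y‖ * ‖v‖) * (‖y‖ * ‖w‖) := by gcongr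
          _ = _ := by ring
      calc _ ≤ ‖y‖ ^ 2 * (‖v‖ * ‖w‖) / (4 * τ ^ 2) + ‖v‖ * ‖w‖ / (2 * τ) := by gcongr
        _ = _ := by ring

end Gaussian

theorem EuclideanSpace.norm_le_sum_abs {ι : Type*} [Fintype ι] (y : EuclideanSpace ℝ ι) :
    ‖y‖ ≤ ∑ i, |y i| := by
  have hsq : ‖y‖ ^ 2 ≤ (∑ i, |y i|) ^ 2 := by
    rw [EuclideanSpace.norm_sq_eq]
    simpa only [Real.norm_eq_abs] using
      Finset.sum_sq_le_sq_sum_of_nonneg (fun i _ => abs_nonneg (y i))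
  exact le_of_sq_le_sq hsq (Finset.sum_nonneg fun i _ => abs_nonneg _)

section SignPerturb

variable {n : ℕ}

theorem signPerturb_apply (ε : Fin n → Bool) (i : Fin n) :
    signPerturb n ε i = (1 / (n : ℝ)) * (if ε i then 1 else -1) := rfl

theorem norm_signPerturb_sq (ε : Fin n → Bool) : ‖signPerturb n ε‖ ^ 2 = 1 / n := by
  rw [EuclideanSpace.norm_sq_eq]
  have hcoord : ∀ i, ‖signPerturb n ε i‖ ^ 2 = 1 / (n : ℝ) ^ 2 := fun i => by
    rw [signPerturb_apply]; split_ifs <;> simp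
  simp only [hcoord, Finset.sum_const, Finset.card_univ, Fintype.card_fin, nsmul_eq_mul]
  rcases n.eq_zero_or_pos with rfl | hn
  · simp
  · field_simp

theorem inner_signPerturb_neg_sign (y : Euc n) :
    ⟪y, signPerturb n (fun i => decide (y i < 0))⟫ = -(∑ i, |y i|) / n := by
  rw [EuclideanSpace.inner_eq_star_dotProduct, neg_div, Finset.sum_div, ← Finset.sum_neg_distrib]
  refine Finset.sum_congr rfl fun i _ => ?_
  simp only [signPerturb_apply, decide_eq_true_eq, star_trivial]
  split_ifs with h
  · rw [abs_of_neg h]; ring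
  · rw [abs_of_nonneg (not_lt.mp h)]; ring

theorem exists_norm_add_signPerturb_sq_le {y : Euc n} (hy : 1 ≤ ‖y‖) :
    ∃ ε, ‖y + signPerturb n ε‖ ^ 2 ≤ ‖y‖ ^ 2 - ‖y‖ / n := by
  refine ⟨fun i => decide (y i < 0), ?_⟩
  rw [norm_add_sq_real, inner_signPerturb_neg_sign, norm_signPerturb_sq]
  have hsum := EuclideanSpace.norm_le_sum_abs y
  have hslack : 0 ≤ 1 / (n : ℝ) * (2 * ∑ i, |y i| - ‖y‖ - 1) :=
    mul_nonneg (by positivity) (by linarith)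
  calc _ = ‖y‖ ^ 2 - ‖y‖ / n - 1 / (n : ℝ) * (2 * ∑ i, |y i| - ‖y‖ - 1) := by ring
    _ ≤ _ := by linarith

end SignPerturb

theorem add_sq_le_mul_exp_div {m t : ℝ} (hm : 1 ≤ m) (ht : 0 ≤ t) :
    t + t ^ 2 ≤ 10 * m ^ 2 * exp (t / (2 * m)) := by
  set a := t / (2 * m) with ha_def
  have ha : 0 ≤ a := by positivity
  have hta : t = 2 * m * a := by rw [ha_def]; field_simp
  have h1 : a ≤ exp a := by simpa using pow_div_factorial_le_exp (x := a) ha 1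
  have h2 : a ^ 2 / 2 ≤ exp a := by simpa using pow_div_factorial_le_exp (x := a) ha 2
  have hm_sq : m ≤ m ^ 2 := by nlinarith
  calc t + t ^ 2 = 2 * m * a + 8 * m ^ 2 * (a ^ 2 / 2) := by rw [hta]; ring
    _ ≤ 2 * m ^ 2 * exp a + 8 * m ^ 2 * exp a := by gcongr
    _ = 10 * m ^ 2 * exp a := by ring

theorem add_sq_mul_gaussian_le_sum_signPerturb {n : ℕ} (hn : 1 ≤ n) {τ c : ℝ} (hτ : 0 < τ)
    (hc : 0 ≤ c) {y : Euc n} (hy : 1 ≤ ‖y‖) :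
    (‖y‖ / (2 * τ) + (‖y‖ / (2 * τ)) ^ 2) * gaussian τ c y ≤
      10 * n ^ 2 * ∑ ε, gaussian τ c (y + signPerturb n ε) := by
  obtain ⟨ε, hε⟩ := exists_norm_add_signPerturb_sq_le hy
  have hm : (1 : ℝ) ≤ n := by exact_mod_cast hn
  have hexp : ‖y‖ / (2 * τ) / (2 * n) = ‖y‖ / n / (4 * τ) := by field_simp; ring
  calc _ ≤ 10 * n ^ 2 * exp (‖y‖ / n / (4 * τ)) * gaussian τ c y := by
        rw [← hexp]
        gcongr
        · exact gaussian_nonneg hc y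
        · exact add_sq_le_mul_exp_div hm (by positivity)
    _ = 10 * n ^ 2 * (gaussian τ c y * exp (‖y‖ / n / (4 * τ))) := by ring
    _ ≤ 10 * n ^ 2 * gaussian τ c (y + signPerturb n ε) := by
        gcongr
        exact gaussian_mul_exp_le hτ hc hε
    _ ≤ 10 * n ^ 2 * ∑ ε, gaussian τ c (y + signPerturb n ε) := by
        gcongr
        exact Finset.single_le_sum (f := fun ε => gaussian τ c (y + signPerturb n ε))
          (fun ε _ => gaussian_nonneg hc _) (Finset.mem_univ ε)

theorem exists_fracHeatKernel_eq_gaussian (n : ℕ) (s : ℝ) {τ : ℝ} (hτ : 0 < τ) :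
    ∃ c, 0 ≤ c ∧ ∀ z, fracHeatKernel n s z τ = gaussian τ c z :=
  ⟨(4 * π) ^ (-(n : ℝ) / 2) * |Gamma (-s)|⁻¹ * τ ^ (-((n : ℝ) / 2 + 1 - s)), by positivity,
    fun z => by rw [fracHeatKernel, if_pos hτ, gaussian]⟩

/-- There is a constant `C = C(n)` such that for all `0 < s < 1`, `τ > 0` and `|y| ≥ 1`,
the first and second spatial partial derivatives of the fully fractional heat kernel satisfy
`|∂_{y_i} G(y,τ)| ≤ C Σ_ε G(y+η_ε,τ)` and `|∂_{y_i}∂_{y_j} G(y,τ)| ≤ C Σ_ε G(y+η_ε,τ)`. -/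
theorem kernel_spatial_derivative_estimates (n : ℕ) (hn : 1 ≤ n) :
    ∃ C : ℝ, 0 < C ∧ ∀ s : ℝ, 0 < s → s < 1 → ∀ τ : ℝ, 0 < τ →
      ∀ y : Euc n, 1 ≤ ‖y‖ →
        (∀ i : Fin n,
          |fderiv ℝ (fun z => fracHeatKernel n s z τ) y (EuclideanSpace.single i 1)| ≤
            C * ∑ ε : Fin n → Bool, fracHeatKernel n s (y + signPerturb n ε) τ) ∧
        (∀ i j : Fin n,
          |fderiv ℝ (fun z =>
              fderiv ℝ (fun z' => fracHeatKernel n s z' τ) z (EuclideanSpace.single j 1))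
            y (EuclideanSpace.single i 1)| ≤
            C * ∑ ε : Fin n → Bool, fracHeatKernel n s (y + signPerturb n ε) τ) := by
  refine ⟨10 * n ^ 2, by positivity, fun s _ _ τ hτ y hy => ?_⟩
  obtain ⟨c, hc, hG⟩ := exists_fracHeatKernel_eq_gaussian n s hτ
  have hsum := add_sq_mul_gaussian_le_sum_signPerturb hn hτ hc hy
  have hg : 0 ≤ gaussian τ c y := gaussian_nonneg hc y
  have hunit (i : Fin n) : ‖EuclideanSpace.single i (1 : ℝ)‖ = 1 := by simp
  have ht : 1 / (2 * τ) ≤ ‖y‖ / (2 * τ) := by gcongr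
  set t := ‖y‖ / (2 * τ)
  simp only [hG]
  refine ⟨fun i => ?_, fun i j => ?_⟩
  · calc _ ≤ ‖y‖ * ‖EuclideanSpace.single i (1 : ℝ)‖ / (2 * τ) * gaussian τ c y :=
          abs_fderiv_gaussian_apply_le hτ hc y _
      _ ≤ (t + t ^ 2) * gaussian τ c y := by
          rw [hunit, mul_one]
          gcongr
          exact le_add_of_nonneg_right (sq_nonneg t)
      _ ≤ _ := hsum
  · calc _ ≤ (‖y‖ ^ 2 / (4 * τ ^ 2) + 1 / (2 * τ)) *
            (‖EuclideanSpace.single i (1 : ℝ)‖ * ‖EuclideanSpace.single j (1 : ℝ)‖) *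
            gaussian τ c y :=
          abs_fderiv_fderiv_gaussian_apply_le hτ hc y _ _
      _ ≤ (t + t ^ 2) * gaussian τ c y := by
          rw [hunit, hunit, mul_one, mul_one, show ‖y‖ ^ 2 / (4 * τ ^ 2) = t ^ 2 by ring]
          gcongr ?_ * _
          linarith
      _ ≤ _ := hsum

end
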